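/- arXiv:1310.4094 — 7 statements merged into one kernel-verified Lean document; each statement's English description precedes it below -/
import Mathlib

section
/- For any double sequence a_{k,l} of complex numbers with sum over k,l of (k+1)^α (l+1)^α |a_{k,l}|^2 finite (α ≤ 2), the diagonal coefficients b_n = Σ_{k=0}^n a_{k,n-k} satisfy Σ_n (n+1)^β |b_n|^2 ≤ Σ_{k,l} (k+1)^α (l+1)^α |a_{k,l}|^2, where β = α−1 if α ≥ 0 and β = 2α−1 if α < 0. -/
open scoped ENNReal NNReal Classical
open Filter

/-- Weight `(k+1)^α` as an extended nonnegative real. -/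
noncomputable def wt (α : ℝ) (k : ℕ) : ℝ≥0∞ := ((k : ℝ≥0∞) + 1) ^ α

/-- Squared norm of the Dirichlet-type space `𝔇_α` of the bidisk, at the level of
Taylor coefficients `a k l`. -/
noncomputable def Dnorm2 (α : ℝ) (a : ℕ → ℕ → ℂ) : ℝ≥0∞ :=
  ∑' p : ℕ × ℕ, wt α p.1 * wt α p.2 * ((‖a p.1 p.2‖₊ : ℝ≥0∞)) ^ 2

/-- Squared norm of the one-variable Dirichlet-type space `D_α`. -/
noncomputable def dnorm2 (α : ℝ) (a : ℕ → ℂ) : ℝ≥0∞ :=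
  ∑' k : ℕ, wt α k * ((‖a k‖₊ : ℝ≥0∞)) ^ 2

/-- Cauchy product (coefficients of the product of two power series in two variables). -/
noncomputable def conv2 (p a : ℕ → ℕ → ℂ) : ℕ → ℕ → ℂ := fun k l =>
  ∑ i ∈ Finset.range (k + 1), ∑ j ∈ Finset.range (l + 1), p i j * a (k - i) (l - j)

/-- Cauchy product in one variable. -/
noncomputable def conv1 (p a : ℕ → ℂ) : ℕ → ℂ := fun k =>
  ∑ i ∈ Finset.range (k + 1), p i * a (k - i)

/-- Coefficients of the constant function `1` in two variables. -/
def one2 : ℕ → ℕ → ℂ := fun k l => if k = 0 ∧ l = 0 then 1 else 0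

/-- Coefficients of the constant function `1` in one variable. -/
def one1 : ℕ → ℂ := fun k => if k = 0 then 1 else 0

/-- `p` is (the coefficient sequence of) a polynomial in `𝔓_n`. -/
def IsPoly2 (n : ℕ) (p : ℕ → ℕ → ℂ) : Prop := ∀ k l, n < k ∨ n < l → p k l = 0

/-- `p` is a one-variable polynomial of degree at most `n`. -/
def IsPoly1 (n : ℕ) (p : ℕ → ℂ) : Prop := ∀ k, n < k → p k = 0

/-- Cyclicity of `a` in `𝔇_α`: some sequence of polynomials `p n` has `‖p n · f - 1‖_α → 0`. -/
def Cyclic2 (α : ℝ) (a : ℕ → ℕ → ℂ) : Prop :=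
  ∃ p : ℕ → ℕ → ℕ → ℂ, (∀ n, ∃ m, IsPoly2 m (p n)) ∧
    Tendsto (fun n => Dnorm2 α (fun k l => conv2 (p n) a k l - one2 k l)) atTop (nhds 0)

/-- Cyclicity of `a` in the one-variable space `D_α`. -/
def Cyclic1 (α : ℝ) (a : ℕ → ℂ) : Prop :=
  ∃ p : ℕ → ℕ → ℂ, (∀ n, ∃ m, IsPoly1 m (p n)) ∧
    Tendsto (fun n => dnorm2 α (fun k => conv1 (p n) a k - one1 k)) atTop (nhds 0)

/-- Squared distance `dist²_{𝔇_α}(1, f · 𝔓_n)`. -/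
noncomputable def distP2 (α : ℝ) (n : ℕ) (a : ℕ → ℕ → ℂ) : ℝ≥0∞ :=
  ⨅ (p : ℕ → ℕ → ℂ) (_ : IsPoly2 n p), Dnorm2 α (fun k l => conv2 p a k l - one2 k l)

/-! The estimate holds antidiagonal by antidiagonal. By Cauchy–Schwarz,
`|b_n|² ≤ (n + 1) ∑_{k ≤ n} |a_{k,n-k}|²`, so it suffices that
`(n + 1) ^ (β(α) + 1) ≤ (k + 1) ^ α (n - k + 1) ^ α` for `k ≤ n`. This follows from
`n + 1 ≤ (k + 1) (n - k + 1) ≤ (n + 1)²`: the left inequality for `α ≥ 0`, the right one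
for `α < 0`. -/

/-- The exponent `β(α)` of the target space `D_β` of the diagonal restriction. -/
noncomputable def diagExponent (α : ℝ) : ℝ := if 0 ≤ α then α - 1 else 2 * α - 1

lemma Nat.add_one_le_mul_sub_add_one {n k : ℕ} (hk : k ≤ n) :
    n + 1 ≤ (k + 1) * (n - k + 1) := by
  obtain ⟨m, rfl⟩ := Nat.exists_eq_add_of_le hk
  rw [Nat.add_sub_cancel_left]
  nlinarith

lemma ENNReal.rpow_le_rpow_of_nonpos {x y : ℝ≥0∞} {z : ℝ} (hxy : x ≤ y) (hz : z ≤ 0) :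
    y ^ z ≤ x ^ z := by
  obtain ⟨w, rfl⟩ : ∃ w, z = -w := ⟨-z, (neg_neg z).symm⟩
  rw [ENNReal.rpow_neg, ENNReal.rpow_neg]
  exact ENNReal.inv_le_inv.mpr (ENNReal.rpow_le_rpow hxy (neg_nonpos.mp hz))

lemma wt_add (α β : ℝ) (n : ℕ) : wt (α + β) n = wt α n * wt β n :=
  ENNReal.rpow_add _ _ (by positivity) (by finiteness)

lemma wt_sub_one_mul (β : ℝ) (n : ℕ) : wt (β - 1) n * ((n : ℝ≥0∞) + 1) = wt β n := by
  rw [← ENNReal.rpow_one ((n : ℝ≥0∞) + 1), ← wt, ← wt_add, sub_add_cancel]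

lemma wt_mul_wt (α : ℝ) (k l : ℕ) :
    wt α k * wt α l = (((k : ℝ≥0∞) + 1) * ((l : ℝ≥0∞) + 1)) ^ α :=
  (ENNReal.mul_rpow_of_ne_top (by finiteness) (by finiteness) α).symm

lemma wt_diagExponent_mul_le_wt_mul_wt (α : ℝ) {n k : ℕ} (hk : k ≤ n) :
    wt (diagExponent α) n * ((n : ℝ≥0∞) + 1) ≤ wt α k * wt α (n - k) := by
  rw [wt_mul_wt]
  by_cases hα : 0 ≤ α
  · rw [diagExponent, if_pos hα, wt_sub_one_mul]
    refine ENNReal.rpow_le_rpow ?_ hα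
    exact_mod_cast Nat.add_one_le_mul_sub_add_one hk
  · rw [diagExponent, if_neg hα, wt_sub_one_mul, two_mul, wt_add, wt_mul_wt]
    refine ENNReal.rpow_le_rpow_of_nonpos ?_ (by linarith)
    gcongr
    exact n.sub_le k

lemma ENNReal.coe_sum_sq_le_card_mul_sum_sq {ι : Type*} (s : Finset ι) (c : ι → ℝ≥0) :
    ((∑ i ∈ s, c i : ℝ≥0) : ℝ≥0∞) ^ 2 ≤ s.card * ∑ i ∈ s, (c i : ℝ≥0∞) ^ 2 := by
  exact_mod_cast sq_sum_le_card_mul_sum_sq (s := s) (f := c)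

lemma nnnorm_sum_antidiagonal_sq_le (a : ℕ → ℕ → ℂ) (n : ℕ) :
    (‖∑ k ∈ Finset.range (n + 1), a k (n - k)‖₊ : ℝ≥0∞) ^ 2 ≤
      ((n : ℝ≥0∞) + 1) * ∑ k ∈ Finset.range (n + 1), (‖a k (n - k)‖₊ : ℝ≥0∞) ^ 2 := by
  calc (‖∑ k ∈ Finset.range (n + 1), a k (n - k)‖₊ : ℝ≥0∞) ^ 2
      ≤ ((∑ k ∈ Finset.range (n + 1), ‖a k (n - k)‖₊ : ℝ≥0) : ℝ≥0∞) ^ 2 := by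
        gcongr
        exact nnnorm_sum_le _ _
    _ ≤ ((n : ℝ≥0∞) + 1) * ∑ k ∈ Finset.range (n + 1), (‖a k (n - k)‖₊ : ℝ≥0∞) ^ 2 := by
        simpa using ENNReal.coe_sum_sq_le_card_mul_sum_sq (Finset.range (n + 1)) _

lemma ENNReal.tsum_prod_eq_tsum_sum_range_sub (F : ℕ × ℕ → ℝ≥0∞) :
    ∑' p, F p = ∑' n, ∑ k ∈ Finset.range (n + 1), F (k, n - k) := by
  rw [← Finset.HasAntidiagonal.sigmaAntidiagonalEquivProd.tsum_eq F, ENNReal.tsum_sigma']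
  congr 1 with n
  exact (Finset.tsum_subtype _ F).trans (Finset.Nat.sum_antidiagonal_eq_sum_range_succ_mk F n)

lemma wt_diagExponent_mul_nnnorm_sum_antidiagonal_sq_le (α : ℝ) (a : ℕ → ℕ → ℂ) (n : ℕ) :
    wt (diagExponent α) n * (‖∑ k ∈ Finset.range (n + 1), a k (n - k)‖₊ : ℝ≥0∞) ^ 2 ≤
      ∑ k ∈ Finset.range (n + 1), wt α k * wt α (n - k) * (‖a k (n - k)‖₊ : ℝ≥0∞) ^ 2 := by
  calc wt (diagExponent α) n * (‖∑ k ∈ Finset.range (n + 1), a k (n - k)‖₊ : ℝ≥0∞) ^ 2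
      ≤ wt (diagExponent α) n * (((n : ℝ≥0∞) + 1) *
          ∑ k ∈ Finset.range (n + 1), (‖a k (n - k)‖₊ : ℝ≥0∞) ^ 2) := by
        gcongr
        exact nnnorm_sum_antidiagonal_sq_le a n
    _ = ∑ k ∈ Finset.range (n + 1),
          wt (diagExponent α) n * ((n : ℝ≥0∞) + 1) * (‖a k (n - k)‖₊ : ℝ≥0∞) ^ 2 := by
        rw [← mul_assoc, Finset.mul_sum]
    _ ≤ ∑ k ∈ Finset.range (n + 1), wt α k * wt α (n - k) * (‖a k (n - k)‖₊ : ℝ≥0∞) ^ 2 := by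
        exact Finset.sum_le_sum fun k hk => mul_le_mul_left
          (wt_diagExponent_mul_le_wt_mul_wt α (Finset.mem_range_succ_iff.mp hk)) _

theorem stmt0_general (α : ℝ) (a : ℕ → ℕ → ℂ) :
    ∑' n : ℕ, wt (if 0 ≤ α then α - 1 else 2 * α - 1) n *
      ((‖∑ k ∈ Finset.range (n + 1), a k (n - k)‖₊ : ℝ≥0∞)) ^ 2 ≤ Dnorm2 α a := by
  rw [Dnorm2, ENNReal.tsum_prod_eq_tsum_sum_range_sub]
  exact ENNReal.tsum_le_tsum (wt_diagExponent_mul_nnnorm_sum_antidiagonal_sq_le α a)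

/-- diagonal restriction estimate. -/
theorem stmt0 (α : ℝ) (hα : α ≤ 2) (a : ℕ → ℕ → ℂ) (hfin : Dnorm2 α a ≠ ⊤) :
    ∑' n : ℕ, wt (if 0 ≤ α then α - 1 else 2 * α - 1) n *
      ((‖∑ k ∈ Finset.range (n + 1), a k (n - k)‖₊ : ℝ≥0∞)) ^ 2 ≤ Dnorm2 α a :=
  stmt0_general α a
end

section
/- For all real α, integers n ≥ 0, and all integers k with 0 ≤ k ≤ n, one has Σ_{k=0}^n (k+1)^{−α}(n−k+1)^{−α} ≤ (n+1)^{−β}, where β = α−1 if α ≥ 0 and β = 2α−1 if α < 0. -/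
open scoped ENNReal NNReal Classical
open Filter

/-- the key combinatorial inequality. -/
theorem stmt1 (α : ℝ) (n : ℕ) :
    ∑ k ∈ Finset.range (n + 1),
      ((k : ℝ) + 1) ^ (-α) * (((n - k : ℕ) : ℝ) + 1) ^ (-α) ≤
      ((n : ℝ) + 1) ^ (-(if 0 ≤ α then α - 1 else 2 * α - 1)) :=
  by
  have hn1 : (0:ℝ) < (n:ℝ) + 1 := by positivity
  have key : ∀ b : ℝ, (∀ k ∈ Finset.range (n+1),
      ((k : ℝ) + 1) ^ (-α) * (((n - k : ℕ) : ℝ) + 1) ^ (-α) ≤ ((n:ℝ)+1) ^ (-b)) →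
      ∑ k ∈ Finset.range (n + 1),
        ((k : ℝ) + 1) ^ (-α) * (((n - k : ℕ) : ℝ) + 1) ^ (-α) ≤ ((n : ℝ) + 1) ^ (-(b - 1)) := by
    intro b hb
    calc ∑ k ∈ Finset.range (n + 1), ((k : ℝ) + 1) ^ (-α) * (((n - k : ℕ) : ℝ) + 1) ^ (-α)
        ≤ ∑ _k ∈ Finset.range (n + 1), ((n:ℝ)+1) ^ (-b) := Finset.sum_le_sum hb
      _ = ((n:ℝ)+1) * ((n:ℝ)+1) ^ (-b) := by
          rw [Finset.sum_const, Finset.card_range]; ring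
      _ = ((n : ℝ) + 1) ^ (-(b - 1)) := by
          rw [show -(b-1) = 1 + -b from by ring, Real.rpow_add hn1, Real.rpow_one]
  split_ifs with hα
  · apply key
    intro k hk
    rw [Finset.mem_range, Nat.lt_succ_iff] at hk
    have hcast : ((n-k:ℕ):ℝ) = (n:ℝ) - k := by
      rw [Nat.cast_sub hk]
    have hk' : (k:ℝ) ≤ n := Nat.cast_le.mpr hk
    have hprod : ((n:ℝ)+1) ≤ ((k:ℝ)+1) * (((n-k:ℕ):ℝ)+1) := by
      rw [hcast]; nlinarith [Nat.cast_nonneg (α := ℝ) k]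
    have h1 : (0:ℝ) ≤ (k:ℝ)+1 := by positivity
    have h2 : (0:ℝ) ≤ ((n-k:ℕ):ℝ)+1 := by positivity
    rw [← Real.mul_rpow h1 h2]
    exact Real.rpow_le_rpow_of_nonpos hn1 hprod (neg_nonpos.mpr hα)
  · apply key
    intro k hk
    rw [Finset.mem_range, Nat.lt_succ_iff] at hk
    have hk' : (k:ℝ) ≤ n := Nat.cast_le.mpr hk
    have hk2 : ((n-k:ℕ):ℝ) ≤ n := Nat.cast_le.mpr (Nat.sub_le n k)
    have hαneg : -α ≥ 0 := by linarith
    have e : ((n:ℝ)+1) ^ (-(2*α)) = ((n:ℝ)+1)^(-α) * ((n:ℝ)+1)^(-α) := by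
      rw [← Real.rpow_add hn1]; ring_nf
    rw [e]
    have b1 : ((k:ℝ)+1) ^ (-α) ≤ ((n:ℝ)+1) ^ (-α) :=
      Real.rpow_le_rpow (by positivity) (by linarith) hαneg
    have b2 : (((n-k:ℕ):ℝ)+1) ^ (-α) ≤ ((n:ℝ)+1) ^ (-α) :=
      Real.rpow_le_rpow (by positivity) (by linarith) hαneg
    exact mul_le_mul b1 b2 (Real.rpow_nonneg (by positivity) _) (Real.rpow_nonneg (by positivity) _)
end

section
/- If f ∈ 𝔇_α is cyclic for the pair of shift operators (S1, S2), then for every fixed w in the unit disk, the slice function f_w(z) = f(z, w) is cyclic in the one-variable Dirichlet-type space D_α. -/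
open scoped ENNReal NNReal Classical
open Filter

/-!
Evaluating the second variable at `w` is bounded from `𝔇_α` to `D_α`: splitting the weight as
`(l+1)^(α/2) · (l+1)^(-α/2)` and applying Cauchy–Schwarz to each row gives
`‖f_w‖²_{D_α} ≤ ‖k_w‖²_{D_α} ‖f‖²_α` with `‖k_w‖² = ∑ (l+1)^(-α) |w|^(2l) < ∞` for `|w| < 1`.
Slicing turns the Cauchy product `p · f` into `p_w · f_w` and `1` into `1`, hence
`‖p_w f_w - 1‖² ≤ ‖k_w‖² ‖p f - 1‖²_α → 0`, and `p_w` is again a polynomial.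
-/

lemma wt_ne_zero (α : ℝ) (k : ℕ) : wt α k ≠ 0 := by
  simp [wt]

lemma wt_ne_top (α : ℝ) (k : ℕ) : wt α k ≠ ⊤ := by
  simp [wt]

lemma ENNReal.sq_tsum_mul_le {ι : Type*} (b c : ι → ℝ≥0∞) :
    (∑' i, b i * c i) ^ 2 ≤ (∑' i, b i ^ 2) * ∑' i, c i ^ 2 := by
  let _ : MeasurableSpace ι := ⊤
  have H := ENNReal.lintegral_mul_le_Lp_mul_Lq MeasureTheory.Measure.count
    Real.HolderConjugate.two_two (Measurable.of_discrete (f := b)).aemeasurable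
    (Measurable.of_discrete (f := c)).aemeasurable
  simp only [Pi.mul_apply, MeasureTheory.lintegral_count, ENNReal.rpow_two] at H
  calc (∑' i, b i * c i) ^ 2
      ≤ ((∑' i, b i ^ 2) ^ (2⁻¹ : ℝ) * (∑' i, c i ^ 2) ^ (2⁻¹ : ℝ)) ^ 2 := by
        simpa [one_div] using pow_le_pow_left₀ zero_le H 2
    _ = (∑' i, b i ^ 2) * ∑' i, c i ^ 2 := by
        have sqrt_sq (x : ℝ≥0∞) : (x ^ (2⁻¹ : ℝ)) ^ 2 = x := by
          rw [← ENNReal.rpow_natCast, ← ENNReal.rpow_mul]; norm_num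
        rw [mul_pow, sqrt_sq, sqrt_sq]

lemma summable_succ_pow_mul_geometric (M : ℕ) {r : ℝ} (hr : ‖r‖ < 1) :
    Summable fun n : ℕ => ((n : ℝ) + 1) ^ M * r ^ n := by
  have hu : (fun n : ℕ => (((n + 1) ^ M : ℕ) : ℝ)) =O[atTop] fun n => ((n ^ M : ℕ) : ℝ) := by
    refine Asymptotics.IsBigO.of_bound (2 ^ M) ?_
    filter_upwards [eventually_ge_atTop 1] with n hn
    have : ((n : ℝ) + 1) ≤ 2 * n := by
      have : (1 : ℝ) ≤ n := by exact_mod_cast hn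
      linarith
    rw [Real.norm_of_nonneg (by positivity), Real.norm_of_nonneg (by positivity)]
    push_cast
    rw [← mul_pow]
    exact pow_le_pow_left₀ (by positivity) this M
  exact_mod_cast (summable_norm_mul_geometric_of_norm_lt_one hr hu).of_norm

noncomputable def kernelNormSq (α : ℝ) (w : ℂ) : ℝ≥0∞ :=
  ∑' l : ℕ, (wt α l)⁻¹ * (‖w‖ₑ ^ l) ^ 2

lemma kernelNormSq_ne_top (α : ℝ) {w : ℂ} (hw : ‖w‖ < 1) : kernelNormSq α w ≠ ⊤ := by
  obtain ⟨M, hM⟩ : ∃ M : ℕ, -α ≤ M := ⟨⌈-α⌉₊, Nat.le_ceil _⟩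
  have hr : ‖‖w‖ ^ 2‖ < 1 := by
    rw [norm_pow, norm_norm]; exact pow_lt_one₀ (norm_nonneg w) hw two_ne_zero
  have hsum := (summable_succ_pow_mul_geometric M hr).toNNReal
  refine ne_top_of_le_ne_top (ENNReal.tsum_coe_ne_top_iff_summable.2 hsum)
    (ENNReal.tsum_le_tsum fun l => ?_)
  have hwt : (wt α l)⁻¹ ≤ ((l : ℝ≥0∞) + 1) ^ M := by
    rw [wt, ← ENNReal.rpow_neg, ← ENNReal.rpow_natCast]
    exact ENNReal.rpow_le_rpow_of_exponent_le (by simp) hM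
  calc (wt α l)⁻¹ * (‖w‖ₑ ^ l) ^ 2 ≤ ((l : ℝ≥0∞) + 1) ^ M * (‖w‖ₑ ^ l) ^ 2 :=
        mul_le_mul_left hwt _
    _ = _ := by
        change _ = ENNReal.ofReal _
        rw [ENNReal.ofReal_mul (by positivity), ENNReal.ofReal_pow (by positivity),
          ENNReal.ofReal_pow (by positivity), ENNReal.ofReal_pow (norm_nonneg w),
          ENNReal.ofReal_add (by positivity) zero_le_one, ENNReal.ofReal_natCast,
          ENNReal.ofReal_one, ofReal_norm, ← pow_mul, ← pow_mul, mul_comm 2 l]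

lemma sq_tsum_enorm_mul_pow_le (α : ℝ) (g : ℕ → ℂ) (w : ℂ) :
    (∑' l, ‖g l * w ^ l‖ₑ) ^ 2 ≤ dnorm2 α g * kernelNormSq α w := by
  set s : ℕ → ℝ≥0∞ := fun l => wt α l ^ (2⁻¹ : ℝ)
  have hs_sq (l : ℕ) : s l ^ 2 = wt α l := by
    rw [← ENNReal.rpow_natCast, ← ENNReal.rpow_mul]; norm_num
  have hs_inv (l : ℕ) : s l * (s l)⁻¹ = 1 :=
    ENNReal.mul_inv_cancel (by simp [s, wt_ne_zero]) (by simp [s, wt_ne_top])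
  calc (∑' l, ‖g l * w ^ l‖ₑ) ^ 2
      = (∑' l, (s l * ‖g l‖ₑ) * ((s l)⁻¹ * ‖w‖ₑ ^ l)) ^ 2 := by
        congr 1
        refine tsum_congr fun l => ?_
        rw [mul_mul_mul_comm, hs_inv, one_mul, enorm_mul, enorm_pow]
    _ ≤ (∑' l, (s l * ‖g l‖ₑ) ^ 2) * ∑' l, ((s l)⁻¹ * ‖w‖ₑ ^ l) ^ 2 :=
        ENNReal.sq_tsum_mul_le _ _
    _ = dnorm2 α g * kernelNormSq α w := by
        simp only [mul_pow, ← ENNReal.inv_pow, hs_sq]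
        rfl

lemma Dnorm2_eq_tsum_dnorm2 (α : ℝ) (a : ℕ → ℕ → ℂ) :
    Dnorm2 α a = ∑' k, wt α k * dnorm2 α (a k) := by
  rw [Dnorm2, ENNReal.tsum_prod (f := fun k l => wt α k * wt α l * (‖a k l‖₊ : ℝ≥0∞) ^ 2)]
  refine tsum_congr fun k => ?_
  rw [dnorm2, ← ENNReal.tsum_mul_left]
  simp only [mul_assoc]

lemma dnorm2_ne_top_of_Dnorm2_ne_top {α : ℝ} {a : ℕ → ℕ → ℂ} (ha : Dnorm2 α a ≠ ⊤) (k : ℕ) :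
    dnorm2 α (a k) ≠ ⊤ := by
  rw [Dnorm2_eq_tsum_dnorm2] at ha
  exact (ENNReal.lt_top_of_mul_ne_top_right (ne_top_of_le_ne_top ha (ENNReal.le_tsum k))
    (wt_ne_zero α k)).ne

lemma summable_norm_mul_pow_of_dnorm2_ne_top {α : ℝ} {g : ℕ → ℂ} (hg : dnorm2 α g ≠ ⊤)
    {w : ℂ} (hw : ‖w‖ < 1) : Summable fun l => ‖g l * w ^ l‖ := by
  have hsq : (∑' l, ‖g l * w ^ l‖ₑ) ^ 2 ≠ ⊤ :=
    ne_top_of_le_ne_top (ENNReal.mul_ne_top hg (kernelNormSq_ne_top α hw))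
      (sq_tsum_enorm_mul_pow_le α g w)
  exact tsum_enorm_ne_top_iff_summable_norm.1 (by simpa using hsq)

/-- Taylor coefficients of the slice `f_w = f(·, w)`. -/
noncomputable def slice (w : ℂ) (a : ℕ → ℕ → ℂ) (k : ℕ) : ℂ := ∑' l, a k l * w ^ l

lemma dnorm2_slice_le (α : ℝ) (w : ℂ) (a : ℕ → ℕ → ℂ) :
    dnorm2 α (slice w a) ≤ kernelNormSq α w * Dnorm2 α a := by
  rw [Dnorm2_eq_tsum_dnorm2, dnorm2, ← ENNReal.tsum_mul_left]
  refine ENNReal.tsum_le_tsum fun k => ?_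
  calc wt α k * (‖slice w a k‖₊ : ℝ≥0∞) ^ 2
      ≤ wt α k * (∑' l, ‖a k l * w ^ l‖ₑ) ^ 2 := by
        gcongr
        exact enorm_tsum_le_tsum_enorm
    _ ≤ wt α k * (dnorm2 α (a k) * kernelNormSq α w) := by
        gcongr
        exact sq_tsum_enorm_mul_pow_le α (a k) w
    _ = kernelNormSq α w * (wt α k * dnorm2 α (a k)) := by ring

lemma hasSum_conv2_mul_pow {p a : ℕ → ℕ → ℂ} {w : ℂ}
    (hp : ∀ i, Summable fun j => ‖p i j * w ^ j‖) (ha : ∀ m, Summable fun l => ‖a m l * w ^ l‖)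
    (k : ℕ) : HasSum (fun l => conv2 p a k l * w ^ l) (conv1 (slice w p) (slice w a) k) := by
  have hrow (l : ℕ) : conv2 p a k l * w ^ l = ∑ i ∈ Finset.range (k + 1),
      ∑ j ∈ Finset.range (l + 1), p i j * w ^ j * (a (k - i) (l - j) * w ^ (l - j)) := by
    rw [conv2, Finset.sum_mul]
    refine Finset.sum_congr rfl fun i _ => ?_
    rw [Finset.sum_mul]
    refine Finset.sum_congr rfl fun j hj => ?_
    rw [← pow_mul_pow_sub w (Nat.le_of_lt_succ (Finset.mem_range.1 hj))]
    ring
  simp only [hrow, conv1]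
  exact hasSum_sum fun i _ => hasSum_sum_range_mul_of_summable_norm
    (f := fun j => p i j * w ^ j) (g := fun l => a (k - i) l * w ^ l) (hp i) (ha (k - i))

lemma hasSum_one2_mul_pow (w : ℂ) (k : ℕ) : HasSum (fun l => one2 k l * w ^ l) (one1 k) := by
  have h : (fun l => one2 k l * w ^ l) = fun l => if l = 0 then one1 k else 0 := by
    funext l
    rcases eq_or_ne l 0 with rfl | hl <;> by_cases hk : k = 0 <;> simp [one1, one2, *]
  exact h ▸ hasSum_ite_eq 0 (one1 k)

lemma slice_conv2_sub_one2 {p a : ℕ → ℕ → ℂ} {w : ℂ}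
    (hp : ∀ i, Summable fun j => ‖p i j * w ^ j‖) (ha : ∀ m, Summable fun l => ‖a m l * w ^ l‖) :
    slice w (fun k l => conv2 p a k l - one2 k l)
      = fun k => conv1 (slice w p) (slice w a) k - one1 k := by
  funext k
  simpa only [slice, sub_mul] using
    ((hasSum_conv2_mul_pow hp ha k).sub (hasSum_one2_mul_pow w k)).tsum_eq

lemma IsPoly2.summable_norm_mul_pow {N : ℕ} {p : ℕ → ℕ → ℂ} (hp : IsPoly2 N p) (w : ℂ) (i : ℕ) :
    Summable fun j => ‖p i j * w ^ j‖ :=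
  summable_of_ne_finset_zero (s := Finset.range (N + 1)) fun j hj => by
    rw [hp i j (Or.inr (by simpa using hj)), zero_mul, norm_zero]

lemma IsPoly2.isPoly1_slice {N : ℕ} {p : ℕ → ℕ → ℂ} (hp : IsPoly2 N p) (w : ℂ) :
    IsPoly1 N (slice w p) := fun i hi => by
  simp [slice, hp i _ (Or.inl hi)]

/-- slices of cyclic functions are cyclic. -/
theorem stmt3 (α : ℝ) (a : ℕ → ℕ → ℂ) (hf : Dnorm2 α a ≠ ⊤) (hc : Cyclic2 α a)
    (w : ℂ) (hw : ‖w‖ < 1) :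
    Cyclic1 α (fun k => ∑' l : ℕ, a k l * w ^ l) := by
  obtain ⟨p, hp, hlim⟩ := hc
  choose N hN using hp
  have ha (m : ℕ) : Summable fun l => ‖a m l * w ^ l‖ :=
    summable_norm_mul_pow_of_dnorm2_ne_top (dnorm2_ne_top_of_Dnorm2_ne_top hf m) hw
  refine ⟨fun n => slice w (p n), fun n => ⟨N n, (hN n).isPoly1_slice w⟩, ?_⟩
  have hbound (n : ℕ) : dnorm2 α (fun k => conv1 (slice w (p n)) (slice w a) k - one1 k)
      ≤ kernelNormSq α w * Dnorm2 α (fun k l => conv2 (p n) a k l - one2 k l) := by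
    rw [← slice_conv2_sub_one2 ((hN n).summable_norm_mul_pow w) ha]
    exact dnorm2_slice_le α w _
  have hlim' := ENNReal.Tendsto.const_mul hlim (Or.inr (kernelNormSq_ne_top α hw))
  rw [mul_zero] at hlim'
  exact tendsto_of_tendsto_of_tendsto_of_le_of_le tendsto_const_nhds hlim' (fun _ => zero_le)
    hbound
end

section
/- Let α ∈ ℝ and f(z1,z2)=g(z1)h(z2) with g,h ∈ D_α. Then f is cyclic in 𝔇_α if and only if g and h are both cyclic in D_α. -/
open scoped ENNReal NNReal Classical
open Filter

/-! A polynomial approximant `p (z₁, z₂)` of `1 / (g h)` restricts on the slice `z₂ = 0` to an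
approximant of `1 / (g · h(0))`, since restricting to a slice does not increase the `𝔇_α`-norm
(the weight of the index `0` is `1`); symmetrically for the slice `z₁ = 0`. Conversely, if
`P g → 1` and `Q h → 1` in `D_α`, then
`P(z₁) Q(z₂) g(z₁) h(z₂) - 1 = (Pg - 1) ⊗ (Qh - 1) + (Pg - 1) ⊗ 1 + 1 ⊗ (Qh - 1)`, and the norm of
each separable term is the product of the one-variable norms. -/

lemma wt_zero (α : ℝ) : wt α 0 = 1 := by simp [wt]

lemma coe_nnnorm_add_sq_le {E : Type*} [SeminormedAddGroup E] (x y : E) :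
    (‖x + y‖₊ : ℝ≥0∞) ^ 2 ≤ 2 * ((‖x‖₊ : ℝ≥0∞) ^ 2 + (‖y‖₊ : ℝ≥0∞) ^ 2) := by
  have : ‖x + y‖₊ ^ 2 ≤ 2 * (‖x‖₊ ^ 2 + ‖y‖₊ ^ 2) :=
    (pow_le_pow_left₀ zero_le (nnnorm_add_le x y) 2).trans add_sq_le
  exact_mod_cast this

section Norms

variable (α : ℝ)

lemma Dnorm2_add_le (u v : ℕ → ℕ → ℂ) :
    Dnorm2 α (fun k l => u k l + v k l) ≤ 2 * (Dnorm2 α u + Dnorm2 α v) := by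
  unfold Dnorm2
  rw [← ENNReal.tsum_add, ← ENNReal.tsum_mul_left]
  refine ENNReal.tsum_le_tsum fun p => ?_
  calc _ ≤ wt α p.1 * wt α p.2 *
        (2 * ((‖u p.1 p.2‖₊ : ℝ≥0∞) ^ 2 + (‖v p.1 p.2‖₊ : ℝ≥0∞) ^ 2)) := by
        gcongr; exact coe_nnnorm_add_sq_le _ _
    _ = _ := by ring

lemma Dnorm2_mul_sep (G H : ℕ → ℂ) :
    Dnorm2 α (fun k l => G k * H l) = dnorm2 α G * dnorm2 α H := by
  unfold Dnorm2 dnorm2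
  rw [ENNReal.tsum_prod', ← ENNReal.tsum_mul_right]
  refine tsum_congr fun k => ?_
  rw [← ENNReal.tsum_mul_left]
  refine tsum_congr fun l => ?_
  simp only [nnnorm_mul, ENNReal.coe_mul]
  ring

lemma dnorm2_one1 : dnorm2 α one1 = 1 := by
  unfold dnorm2
  rw [tsum_eq_single 0 fun k hk => by simp [one1, hk]]
  simp [one1, wt_zero]

lemma Dnorm2_swap (F : ℕ → ℕ → ℂ) : Dnorm2 α (fun k l => F l k) = Dnorm2 α F := by
  unfold Dnorm2
  rw [← (Equiv.prodComm ℕ ℕ).tsum_eq]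
  exact tsum_congr fun p => by simp [mul_comm (wt α p.1)]

lemma dnorm2_row_le_Dnorm2 (F : ℕ → ℕ → ℂ) : dnorm2 α (fun k => F k 0) ≤ Dnorm2 α F := by
  have hinj : Function.Injective fun k : ℕ => (k, 0) := fun a b hab => congrArg Prod.fst hab
  simpa [dnorm2, Dnorm2, wt_zero] using ENNReal.tsum_comp_le_tsum_of_injective hinj
    fun p : ℕ × ℕ => wt α p.1 * wt α p.2 * (‖F p.1 p.2‖₊ : ℝ≥0∞) ^ 2

end Norms

section Products

variable (p a : ℕ → ℕ → ℂ)

lemma conv2_swap (k l : ℕ) :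
    conv2 (fun k l => p l k) (fun k l => a l k) k l = conv2 p a l k :=
  Finset.sum_comm

lemma conv2_row (k : ℕ) : conv2 p a k 0 = conv1 (fun i => p i 0) (fun i => a i 0) k := by
  simp [conv2, conv1]

lemma conv2_mul_sep (p₁ p₂ g h : ℕ → ℂ) (k l : ℕ) :
    conv2 (fun k l => p₁ k * p₂ l) (fun k l => g k * h l) k l = conv1 p₁ g k * conv1 p₂ h l := by
  simp only [conv2, conv1, Finset.sum_mul_sum]
  exact Finset.sum_congr rfl fun i _ => Finset.sum_congr rfl fun j _ => by ring

lemma one2_eq_mul (k l : ℕ) : one2 k l = one1 k * one1 l := by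
  by_cases hk : k = 0 <;> by_cases hl : l = 0 <;> simp [one1, one2, hk, hl]

end Products

variable {α : ℝ}

lemma Cyclic2.swap {F : ℕ → ℕ → ℂ} (hF : Cyclic2 α F) : Cyclic2 α (fun k l => F l k) := by
  obtain ⟨p, hp, ht⟩ := hF
  refine ⟨fun n k l => p n l k, fun n => ?_, ?_⟩
  · obtain ⟨m, hm⟩ := hp n
    exact ⟨m, fun k l hkl => hm l k hkl.symm⟩
  · convert ht using 2 with n
    rw [← Dnorm2_swap α]
    simp only [conv2_swap, one2, and_comm]

lemma Cyclic2.cyclic1_row {F : ℕ → ℕ → ℂ} (hF : Cyclic2 α F) :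
    Cyclic1 α (fun k => F k 0) := by
  obtain ⟨p, hp, ht⟩ := hF
  refine ⟨fun n k => p n k 0, fun n => ?_, ?_⟩
  · obtain ⟨m, hm⟩ := hp n
    exact ⟨m, fun k hk => hm k 0 (Or.inl hk)⟩
  · refine tendsto_of_tendsto_of_tendsto_of_le_of_le tendsto_const_nhds ht (fun _ => zero_le)
      fun n => ?_
    calc _ = dnorm2 α (fun k => conv2 (p n) F k 0 - one2 k 0) := by
          simp only [conv2_row, one2, one1, and_true]
      _ ≤ _ := dnorm2_row_le_Dnorm2 α fun k l => conv2 (p n) F k l - one2 k l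

lemma Cyclic1.of_mul_const {g : ℕ → ℂ} {c : ℂ} (hc : Cyclic1 α (fun k => g k * c)) :
    Cyclic1 α g := by
  obtain ⟨p, hp, ht⟩ := hc
  refine ⟨fun n i => c * p n i, fun n => ?_, ?_⟩
  · obtain ⟨m, hm⟩ := hp n
    exact ⟨m, fun k hk => by simp [hm k hk]⟩
  · convert ht using 5 with n k
    exact Finset.sum_congr rfl fun i _ => by ring

lemma Cyclic1.cyclic2_mul {g h : ℕ → ℂ} (hg : Cyclic1 α g) (hh : Cyclic1 α h) :
    Cyclic2 α (fun k l => g k * h l) := by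
  obtain ⟨p, hp, htp⟩ := hg
  obtain ⟨q, hq, htq⟩ := hh
  refine ⟨fun n k l => p n k * q n l, fun n => ?_, ?_⟩
  · obtain ⟨m₁, hm₁⟩ := hp n
    obtain ⟨m₂, hm₂⟩ := hq n
    refine ⟨max m₁ m₂, fun k l hkl => ?_⟩
    rcases hkl with hk | hl
    · simp [hm₁ k (lt_of_le_of_lt (le_max_left _ _) hk)]
    · simp [hm₂ l (lt_of_le_of_lt (le_max_right _ _) hl)]
  set A := fun n k => conv1 (p n) g k - one1 k
  set B := fun n l => conv1 (q n) h l - one1 l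
  have hbound : ∀ n, Dnorm2 α (fun k l =>
      conv2 (fun k l => p n k * q n l) (fun k l => g k * h l) k l - one2 k l) ≤
      2 * (2 * (dnorm2 α (A n) * dnorm2 α (B n) + dnorm2 α (A n)) + dnorm2 α (B n)) := by
    intro n
    have hdecomp : (fun k l =>
        conv2 (fun k l => p n k * q n l) (fun k l => g k * h l) k l - one2 k l) =
        fun k l => (A n k * B n l + A n k * one1 l) + one1 k * B n l := by
      funext k l
      simp only [conv2_mul_sep, one2_eq_mul, A, B]
      ring
    rw [hdecomp]
    calc _ ≤ 2 * (Dnorm2 α (fun k l => A n k * B n l + A n k * one1 l) +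
          Dnorm2 α (fun k l => one1 k * B n l)) := Dnorm2_add_le α _ _
      _ ≤ 2 * (2 * (Dnorm2 α (fun k l => A n k * B n l) + Dnorm2 α (fun k l => A n k * one1 l)) +
          Dnorm2 α (fun k l => one1 k * B n l)) := by gcongr; exact Dnorm2_add_le α _ _
      _ = _ := by simp only [Dnorm2_mul_sep, dnorm2_one1, mul_one, one_mul]
  refine tendsto_of_tendsto_of_tendsto_of_le_of_le tendsto_const_nhds ?_ (fun _ => zero_le) hbound
  have hAB := ENNReal.Tendsto.mul htp (Or.inr ENNReal.zero_ne_top) htq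
    (Or.inr ENNReal.zero_ne_top)
  simpa using ENNReal.Tendsto.const_mul
    ((ENNReal.Tendsto.const_mul (hAB.add htp) (Or.inr ENNReal.ofNat_ne_top)).add htq)
    (Or.inr ENNReal.ofNat_ne_top)

theorem stmt5_general (α : ℝ) (g h : ℕ → ℂ) :
    Cyclic2 α (fun k l => g k * h l) ↔ Cyclic1 α g ∧ Cyclic1 α h := by
  refine ⟨fun hf => ⟨hf.cyclic1_row.of_mul_const, ?_⟩, fun ⟨hg, hh⟩ => hg.cyclic2_mul hh⟩
  have hrow : Cyclic1 α (fun l => g 0 * h l) := hf.swap.cyclic1_row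
  simp only [mul_comm (g 0)] at hrow
  exact hrow.of_mul_const

/-- a separable function is cyclic iff both factors are cyclic. -/
theorem stmt5 (α : ℝ) (g h : ℕ → ℂ) (hg : dnorm2 α g ≠ ⊤) (hh : dnorm2 α h ≠ ⊤) :
    Cyclic2 α (fun k l => g k * h l) ↔ Cyclic1 α g ∧ Cyclic1 α h :=
  stmt5_general α g h
end

section
/- Let f ∈ 𝒥_{α,M,N} (a function in 𝔇_α whose only nonzero coefficients are at monomials z1^{Mk} z2^{Nk}). Let r_n be any polynomial in two variables and let s_n be its projection onto 𝒥_{α,M,N} (keeping only coefficients at monomials z1^{Mk} z2^{Nk}). Then ‖r_n f − 1‖_α ≥ ‖s_n f − 1‖_α. -/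
open scoped ENNReal NNReal Classical
open Filter

/-- projecting a polynomial onto 𝒥_{α,M,N} decreases the approximation error. -/
theorem stmt9 (α : ℝ) (M N : ℕ) (hM : 1 ≤ M) (hN : 1 ≤ N) (a : ℕ → ℕ → ℂ)
    (hfin : Dnorm2 α a ≠ ⊤)
    (hdiag : ∀ k l, (¬ ∃ m, k = M * m ∧ l = N * m) → a k l = 0)
    (r : ℕ → ℕ → ℂ) (n : ℕ) (hr : IsPoly2 n r) :
    Dnorm2 α (fun k l =>
        conv2 (fun k' l' => if ∃ m, k' = M * m ∧ l' = N * m then r k' l' else 0) a k l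
          - one2 k l) ≤
      Dnorm2 α (fun k l => conv2 r a k l - one2 k l) := by
  unfold Dnorm2
  refine ENNReal.tsum_le_tsum fun p => ?_
  obtain ⟨k, l⟩ := p
  by_cases h : ∃ m, k = M * m ∧ l = N * m
  · -- diagonal point: the two coefficients agree
    obtain ⟨m, hk, hl⟩ := h
    have : conv2 (fun k' l' => if ∃ m, k' = M * m ∧ l' = N * m then r k' l' else 0) a k l
        = conv2 r a k l := by
      unfold conv2
      refine Finset.sum_congr rfl fun i hi => Finset.sum_congr rfl fun j hj => ?_
      by_cases hij : ∃ m, i = M * m ∧ j = N * m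
      · simp [hij]
      · have ha : a (k - i) (l - j) = 0 := by
          apply hdiag
          rintro ⟨m', hk', hl'⟩
          have hik : i ≤ k := Nat.lt_succ_iff.mp (Finset.mem_range.mp hi)
          have hjl : j ≤ l := Nat.lt_succ_iff.mp (Finset.mem_range.mp hj)
          have hm' : m' ≤ m := by
            have : M * m' ≤ M * m := by
              rw [← hk', ← hk]; exact Nat.sub_le k i
            exact Nat.le_of_mul_le_mul_left this (by omega)
          have e1 : M * (m - m') = M * m - M * m' := by rw [Nat.mul_sub]
          have e2 : N * (m - m') = N * m - N * m' := by rw [Nat.mul_sub]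
          exact hij ⟨m - m', by omega, by omega⟩
        simp [hij, ha]
    simp [this]
  · -- off-diagonal point: left coefficient is 0
    have h0 : conv2 (fun k' l' => if ∃ m, k' = M * m ∧ l' = N * m then r k' l' else 0) a k l
        = 0 := by
      unfold conv2
      refine Finset.sum_eq_zero fun i hi => Finset.sum_eq_zero fun j hj => ?_
      by_cases hij : ∃ m, i = M * m ∧ j = N * m
      · obtain ⟨m1, hi1, hj1⟩ := hij
        have ha : a (k - i) (l - j) = 0 := by
          apply hdiag
          rintro ⟨m2, hk2, hl2⟩
          have hik : i ≤ k := Nat.lt_succ_iff.mp (Finset.mem_range.mp hi)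
          have hjl : j ≤ l := Nat.lt_succ_iff.mp (Finset.mem_range.mp hj)
          have e1 : M * (m1 + m2) = M * m1 + M * m2 := Nat.mul_add M m1 m2
          have e2 : N * (m1 + m2) = N * m1 + N * m2 := Nat.mul_add N m1 m2
          exact h ⟨m1 + m2, by omega, by omega⟩
        simp [ha]
      · simp [hij]
    have h1 : one2 k l = 0 := by
      unfold one2
      have : ¬ (k = 0 ∧ l = 0) := by
        rintro ⟨rfl, rfl⟩; exact h ⟨0, by omega, by omega⟩
      simp [this]
    simp [h0, h1]
end

section
/- Let α ≤ 1/2, f(z1,z2) = 1 − z1z2, and define the Riesz polynomial p_n(z1,z2) = Σ_{k=0}^n (1 − k^{1−α}/(n+1)^{1−α}) z1^k z2^k. Then p_n f − 1 = −(n+1)^{−(1−α)} Σ_{k=1}^{n+1} [k^{1−α} − (k−1)^{1−α}] (z1z2)^k, and there is a constant C(α) with ‖p_n f − 1‖²_α ≤ C(α)/(n+1)^{1−2α}. Consequently f is cyclic in 𝔇_α for α ≤ 1/2. -/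
open scoped ENNReal NNReal Classical
open Filter

/-! ### Auxiliary lemmas -/

private lemma wt_eq' (α : ℝ) (k : ℕ) : wt α k = ENNReal.ofReal (((k:ℝ)+1) ^ α) := by
  have h1 : ((k : ℝ≥0∞) + 1) = ENNReal.ofReal ((k:ℝ)+1) := by
    rw [ENNReal.ofReal_add (by positivity) zero_le_one]
    simp
  rw [wt, h1, ENNReal.ofReal_rpow_of_pos (by positivity)]

private lemma term_eq' (α : ℝ) (k : ℕ) (r : ℝ) :
    wt α k * wt α k * ((‖((r:ℝ):ℂ)‖₊ : ℝ≥0∞)) ^ 2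
      = ENNReal.ofReal (((k:ℝ)+1) ^ (2*α) * r^2) := by
  have hx : (0:ℝ) < (k:ℝ)+1 := by positivity
  have h2 : ((‖((r:ℝ):ℂ)‖₊ : ℝ≥0∞)) ^ 2 = ENNReal.ofReal (r^2) := by
    rw [← ENNReal.ofReal_coe_nnreal, coe_nnnorm, ← ENNReal.ofReal_pow (norm_nonneg _)]
    congr 1
    simp [Complex.norm_real, Real.norm_eq_abs, sq_abs]
  rw [wt_eq', h2, ← ENNReal.ofReal_mul (Real.rpow_nonneg hx.le _),
    ← ENNReal.ofReal_mul (by positivity)]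
  have : ((k:ℝ)+1) ^ α * ((k:ℝ)+1) ^ α = ((k:ℝ)+1) ^ (2*α) := by
    rw [← Real.rpow_add hx]; ring_nf
  rw [this]

private lemma diag' (α : ℝ) (g : ℕ → ℂ) :
    Dnorm2 α (fun k l => if k = l then g k else 0)
      = ∑' k, wt α k * wt α k * ((‖g k‖₊ : ℝ≥0∞)) ^ 2 := by
  rw [Dnorm2, ENNReal.tsum_prod']
  congr 1
  funext k
  have : (fun l => wt α k * wt α l * ((‖if k = l then g k else 0‖₊ : ℝ≥0∞)) ^ 2)
      = fun l => if l = k then wt α k * wt α k * ((‖g k‖₊ : ℝ≥0∞)) ^ 2 else 0 := by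
    funext l
    by_cases h : k = l
    · subst h; simp
    · simp [h, Ne.symm h]
  rw [this, tsum_ite_eq]

private lemma diag_norm' (α : ℝ) (ψ : ℕ → ℝ) (M : ℕ) (hM : ∀ k, M ≤ k → ψ k = 0) :
    Dnorm2 α (fun k l => if k = l then ((ψ k : ℝ) : ℂ) else 0)
      = ENNReal.ofReal (∑ k ∈ Finset.range M, ((k:ℝ)+1) ^ (2*α) * ψ k ^ 2) := by
  rw [diag']
  rw [tsum_eq_sum (s := Finset.range M) (by
    intro k hk
    rw [hM k (by simpa using hk)]
    simp)]
  rw [ENNReal.ofReal_sum_of_nonneg (fun k _ => by positivity)]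
  exact Finset.sum_congr rfl fun k _ => term_eq' α k (ψ k)

private lemma convA' (f : ℕ → ℕ → ℂ)
    (hf : f = fun k l => if k = 0 ∧ l = 0 then 1 else if k = 1 ∧ l = 1 then -1 else 0)
    (φ : ℕ → ℝ) (hφ0 : φ 0 = 1) (k l : ℕ) :
    conv2 (fun i j => if i = j then ((φ i : ℝ) : ℂ) else 0) f k l - one2 k l
      = if k = l ∧ 1 ≤ k then ((φ k - φ (k-1) : ℝ) : ℂ) else 0 := by
  have hconv : conv2 (fun i j => if i = j then ((φ i : ℝ) : ℂ) else 0) f k l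
      = ∑ i ∈ Finset.range (k+1), if i ≤ l then ((φ i : ℝ) : ℂ) * f (k-i) (l-i) else 0 := by
    rw [conv2]
    refine Finset.sum_congr rfl fun i _ => ?_
    rw [show (∑ j ∈ Finset.range (l + 1),
        (if i = j then ((φ i : ℝ):ℂ) else 0) * f (k - i) (l - j))
      = ∑ j ∈ Finset.range (l + 1),
        (if i = j then ((φ i : ℝ):ℂ) * f (k - i) (l - j) else 0) from
      Finset.sum_congr rfl fun j _ => by split <;> simp]
    rw [Finset.sum_ite_eq]
    simp [Nat.lt_succ_iff]
  by_cases hkl : k = l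
  · subst hkl
    by_cases hk : 1 ≤ k
    · have key : ∀ i ∈ Finset.range (k+1),
          (if i ≤ k then ((φ i : ℝ) : ℂ) * f (k-i) (k-i) else 0)
          = (if i = k then ((φ k : ℝ):ℂ) else 0) + (if i = k-1 then (-(φ (k-1) : ℝ):ℂ) else 0) := by
        intro i hi
        rw [Finset.mem_range, Nat.lt_succ_iff] at hi
        rw [if_pos hi]
        by_cases h1 : i = k
        · subst h1
          have e2 : ¬ (i = i - 1) := by omega
          simp [hf, Nat.sub_self, e2]
        · by_cases h2 : i = k - 1
          · rw [h2]
            have e1 : k - (k-1) = 1 := by omega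
            have e2 : ¬ (k - 1 = k) := by omega
            simp [hf, e1, e2]
          · have h3 : ¬(k - i = 0) := by omega
            have h4 : ¬(k - i = 1) := by omega
            simp [hf, h1, h2, h3, h4]
      rw [hconv, Finset.sum_congr rfl key, Finset.sum_add_distrib,
        Finset.sum_ite_eq' _ k, Finset.sum_ite_eq' _ (k-1),
        if_pos (Finset.mem_range.2 (by omega)), if_pos (Finset.mem_range.2 (by omega)),
        if_pos ⟨rfl, hk⟩]
      have h0 : one2 k k = 0 := by simp [one2]; omega
      rw [h0]
      push_cast
      ring
    · have hk0 : k = 0 := by omega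
      subst hk0
      rw [hconv, Finset.sum_range_one]
      simp [hf, one2, hφ0]
  · rw [hconv]
    have key : ∀ i ∈ Finset.range (k+1),
        (if i ≤ l then ((φ i : ℝ) : ℂ) * f (k-i) (l-i) else 0) = 0 := by
      intro i hi
      rw [Finset.mem_range, Nat.lt_succ_iff] at hi
      by_cases hil : i ≤ l
      · rw [if_pos hil]
        have h3 : ¬(k - i = 0 ∧ l - i = 0) := by omega
        have h4 : ¬(k - i = 1 ∧ l - i = 1) := by omega
        simp [hf, h3, h4]
      · rw [if_neg hil]
    rw [Finset.sum_eq_zero key]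
    have h0 : one2 k l = 0 := by
      have : ¬ (k = 0 ∧ l = 0) := by omega
      simp [one2, this]
    rw [h0, if_neg (by tauto)]
    simp

private lemma mvt' (q : ℝ) (hq : 1/2 ≤ q) (k : ℕ) (hk : 1 ≤ k) :
    (k:ℝ)^q - ((k:ℝ)-1)^q ≤ 2*q*(k:ℝ)^(q-1) := by
  rcases eq_or_lt_of_le hk with h1 | h2
  · have hk1 : (k:ℝ) = 1 := by rw [← h1]; norm_num
    rw [hk1]
    simp [Real.one_rpow, Real.zero_rpow (by linarith : q ≠ 0)]
    linarith
  · have hk2 : 2 ≤ k := h2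
    have hkR : (2:ℝ) ≤ (k:ℝ) := by exact_mod_cast hk2
    have hab : (k:ℝ) - 1 < (k:ℝ) := by linarith
    have hapos : (0:ℝ) < (k:ℝ) - 1 := by linarith
    obtain ⟨c, hc, hceq⟩ := exists_hasDerivAt_eq_slope (fun x => x ^ q)
      (fun x => q * x ^ (q-1)) hab
      (by
        apply ContinuousOn.rpow_const continuousOn_id
        intro x hx
        exact Or.inl (by simp only [id]; rintro rfl; simp at hx; linarith))
      (fun x hx => Real.hasDerivAt_rpow_const (Or.inl (by rintro rfl; simp at hx; linarith)))
    have hc1 : (k:ℝ) - 1 < c := hc.1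
    have hc2 : c < (k:ℝ) := hc.2
    have hcpos : 0 < c := lt_trans hapos hc1
    have heq : (k:ℝ)^q - ((k:ℝ)-1)^q = q * c ^ (q-1) := by
      rw [hceq]; ring_nf
    rw [heq]
    have hkpos : (0:ℝ) < (k:ℝ) := by linarith
    by_cases hq1 : 1 ≤ q
    · have : c ^ (q-1) ≤ (k:ℝ) ^ (q-1) :=
        Real.rpow_le_rpow hcpos.le hc2.le (by linarith)
      nlinarith [Real.rpow_nonneg hkpos.le (q-1)]
    · push_neg at hq1
      have hhalf : (k:ℝ)/2 ≤ (k:ℝ) - 1 := by linarith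
      have h1 : c ^ (q-1) ≤ ((k:ℝ)/2) ^ (q-1) :=
        Real.rpow_le_rpow_of_nonpos (by linarith) (by linarith) (by linarith)
      have h2 : ((k:ℝ)/2) ^ (q-1) = (k:ℝ)^(q-1) / (2:ℝ)^(q-1) :=
        Real.div_rpow hkpos.le (by norm_num : (0:ℝ) ≤ 2) _
      have h3 : (k:ℝ)^(q-1) / (2:ℝ)^(q-1) = (k:ℝ)^(q-1) * (2:ℝ)^(1-q) := by
        rw [div_eq_mul_inv, ← Real.rpow_neg (by norm_num)]
        ring_nf
      have h4 : (2:ℝ)^(1-q) ≤ 2 := by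
        calc (2:ℝ)^(1-q) ≤ (2:ℝ)^(1:ℝ) :=
              Real.rpow_le_rpow_of_exponent_le one_le_two (by linarith)
        _ = 2 := Real.rpow_one 2
      have h5 : c ^ (q-1) ≤ (k:ℝ)^(q-1) * 2 := by
        rw [h2, h3] at h1
        nlinarith [Real.rpow_nonneg hkpos.le (q-1)]
      nlinarith

private lemma ratio_bound' (α : ℝ) (hα : α ≤ 1/2) (k : ℕ) (hk : 1 ≤ k) :
    ((k:ℝ)+1)^(2*α) * (k:ℝ)^(-(2*α)) ≤ 2 := by
  have hkpos : (0:ℝ) < (k:ℝ) := by exact_mod_cast hk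
  have hb : ((k:ℝ)+1)^(2*α) * (k:ℝ)^(-(2*α)) = (((k:ℝ)+1)/(k:ℝ))^(2*α) := by
    rw [Real.div_rpow (by positivity) hkpos.le, Real.rpow_neg hkpos.le, div_eq_mul_inv]
  rw [hb]
  have hb1 : (1:ℝ) ≤ ((k:ℝ)+1)/(k:ℝ) := by
    rw [le_div_iff₀ hkpos]; linarith
  have hb2 : ((k:ℝ)+1)/(k:ℝ) ≤ 2 := by
    rw [div_le_iff₀ hkpos]
    have h1 : (1:ℝ) ≤ (k:ℝ) := by exact_mod_cast hk
    linarith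
  by_cases hs : 0 ≤ 2*α
  · calc (((k:ℝ)+1)/(k:ℝ))^(2*α) ≤ (2:ℝ)^(2*α) :=
          Real.rpow_le_rpow (by linarith) hb2 hs
    _ ≤ (2:ℝ)^(1:ℝ) := Real.rpow_le_rpow_of_exponent_le one_le_two (by linarith)
    _ = 2 := Real.rpow_one 2
  · push_neg at hs
    calc (((k:ℝ)+1)/(k:ℝ))^(2*α) ≤ 1 :=
        Real.rpow_le_one_of_one_le_of_nonpos hb1 hs.le
    _ ≤ 2 := one_le_two

private lemma rieszSum' (α : ℝ) (hα : α ≤ 1/2) (n : ℕ) (ψ : ℕ → ℝ) (hψ0 : ψ 0 = 0)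
    (hψ : ∀ k, 1 ≤ k → k ≤ n+1 →
      ψ k = -(((k:ℝ)^(1-α) - ((k:ℝ)-1)^(1-α))/((n:ℝ)+1)^(1-α))) :
    ∑ k ∈ Finset.range (n+2), ((k:ℝ)+1)^(2*α) * ψ k ^ 2
      ≤ (16*(1-α)^2) / ((n:ℝ)+1)^(1-2*α) := by
  set q : ℝ := 1 - α with hqdef
  have hq : 1/2 ≤ q := by rw [hqdef]; linarith
  have hnpos : (0:ℝ) < (n:ℝ)+1 := by positivity
  have hN : (0:ℝ) < ((n:ℝ)+1)^q := Real.rpow_pos_of_pos hnpos q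
  set B : ℝ := 8*q^2 * (((n:ℝ)+1)^(2*q))⁻¹ with hBdef
  have hBnn : 0 ≤ B := by positivity
  have hterm : ∀ k ∈ Finset.range (n+2), ((k:ℝ)+1)^(2*α) * ψ k ^ 2 ≤ B := by
    intro k hk
    rw [Finset.mem_range] at hk
    by_cases hk1 : 1 ≤ k
    · have hkpos : (0:ℝ) < (k:ℝ) := by exact_mod_cast hk1
      have hψk := hψ k hk1 (by omega)
      have hk1R : (1:ℝ) ≤ (k:ℝ) := by exact_mod_cast hk1
      have hd0 : 0 ≤ (k:ℝ)^q - ((k:ℝ)-1)^q := by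
        have := Real.rpow_le_rpow (by linarith : (0:ℝ) ≤ (k:ℝ)-1)
          (by linarith : (k:ℝ)-1 ≤ (k:ℝ)) (by linarith : (0:ℝ) ≤ q)
        linarith
      have hd1 := mvt' q hq k hk1
      have hsq : ψ k ^ 2 ≤ (2*q*(k:ℝ)^(q-1))^2 / (((n:ℝ)+1)^q)^2 := by
        rw [hψk, neg_sq, div_pow]
        have : ((k:ℝ)^q - ((k:ℝ)-1)^q)^2 ≤ (2*q*(k:ℝ)^(q-1))^2 :=
          pow_le_pow_left₀ hd0 hd1 2
        exact div_le_div_of_nonneg_right this (by positivity) |>.trans (le_refl _)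
      have hkr : ((k:ℝ)^(q-1))^2 = (k:ℝ)^(-(2*α)) := by
        rw [← Real.rpow_natCast ((k:ℝ)^(q-1)) 2, ← Real.rpow_mul hkpos.le]
        norm_num
        congr 1
        rw [hqdef]; ring
      have hNr : (((n:ℝ)+1)^q)^2 = ((n:ℝ)+1)^(2*q) := by
        rw [← Real.rpow_natCast (((n:ℝ)+1)^q) 2, ← Real.rpow_mul hnpos.le]
        norm_num
        congr 1
        ring
      have step : ((k:ℝ)+1)^(2*α) * ψ k ^ 2
          ≤ ((k:ℝ)+1)^(2*α) * ((2*q*(k:ℝ)^(q-1))^2 / (((n:ℝ)+1)^q)^2) :=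
        mul_le_mul_of_nonneg_left hsq (by positivity)
      refine step.trans ?_
      have expand : ((k:ℝ)+1)^(2*α) * ((2*q*(k:ℝ)^(q-1))^2 / (((n:ℝ)+1)^q)^2)
          = (4*q^2) * (((k:ℝ)+1)^(2*α) * (k:ℝ)^(-(2*α))) * (((n:ℝ)+1)^(2*q))⁻¹ := by
        rw [← hkr, ← hNr]; field_simp; ring
      rw [expand, hBdef]
      have hrb := ratio_bound' α hα k hk1
      have : (0:ℝ) ≤ (((n:ℝ)+1)^(2*q))⁻¹ := by positivity
      nlinarith [sq_nonneg q, mul_nonneg (mul_nonneg (by positivity : (0:ℝ) ≤ 4*q^2)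
        (by positivity : (0:ℝ) ≤ ((k:ℝ)+1)^(2*α) * (k:ℝ)^(-(2*α)))) this]
    · have hk0 : k = 0 := by omega
      subst hk0
      rw [hψ0]
      simpa using hBnn
  have hsum := Finset.sum_le_card_nsmul _ _ B hterm
  rw [Finset.card_range, nsmul_eq_mul] at hsum
  refine hsum.trans ?_
  have h2q : ((n:ℝ)+1)^(2*q) = ((n:ℝ)+1)^(1-2*α) * ((n:ℝ)+1) := by
    have he : (2*q : ℝ) = (1-2*α) + 1 := by rw [hqdef]; ring
    rw [he, Real.rpow_add hnpos, Real.rpow_one]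
  have hD : (0:ℝ) < ((n:ℝ)+1)^(1-2*α) := Real.rpow_pos_of_pos hnpos _
  rw [hBdef, h2q, div_eq_mul_inv]
  have hqsq : (1-α)^2 = q^2 := by rw [hqdef]
  rw [hqsq]
  rw [mul_inv]
  have hkey : ((n:ℕ):ℝ) + 2 ≤ 2 * ((n:ℝ)+1) := by push_cast; linarith
  have : (0:ℝ) ≤ (((n:ℝ)+1)^(1-2*α))⁻¹ := by positivity
  calc ((n:ℕ)+2 : ℕ) * (8*q^2 * ((((n:ℝ)+1)^(1-2*α))⁻¹ * ((n:ℝ)+1)⁻¹))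
      = (8*q^2) * (((n:ℕ):ℝ)+2) * ((n:ℝ)+1)⁻¹ * (((n:ℝ)+1)^(1-2*α))⁻¹ := by push_cast; ring
    _ ≤ (8*q^2) * (2*((n:ℝ)+1)) * ((n:ℝ)+1)⁻¹ * (((n:ℝ)+1)^(1-2*α))⁻¹ := by
        gcongr
    _ = 16*q^2 * (((n:ℝ)+1)^(1-2*α))⁻¹ := by field_simp; ring

private lemma logSum' (α : ℝ) (hα : α ≤ 1/2) (n : ℕ) (ψ : ℕ → ℝ) (hψ0 : ψ 0 = 0)
    (hψ : ∀ k, 1 ≤ k → k ≤ n+1 →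
      ψ k = -((Real.log ((k:ℝ)+1) - Real.log (k:ℝ)) / Real.log ((n:ℝ)+2))) :
    ∑ k ∈ Finset.range (n+2), ((k:ℝ)+1)^(2*α) * ψ k ^ 2 ≤ 2 / Real.log ((n:ℝ)+2) := by
  set L : ℝ := Real.log ((n:ℝ)+2) with hLdef
  have hL : 0 < L := Real.log_pos (by linarith [Nat.cast_nonneg (α := ℝ) n])
  set c : ℕ → ℝ := fun k => Real.log ((k:ℝ)+1) - Real.log (k:ℝ) with hcdef
  have hterm : ∀ k ∈ Finset.range (n+2),
      ((k:ℝ)+1)^(2*α) * ψ k ^ 2 ≤ (2/L^2) * c k := by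
    intro k hk
    rw [Finset.mem_range] at hk
    by_cases hk1 : 1 ≤ k
    · have hkpos : (0:ℝ) < (k:ℝ) := by exact_mod_cast hk1
      have hk1R : (1:ℝ) ≤ (k:ℝ) := by exact_mod_cast hk1
      have hc0 : 0 ≤ c k := by
        have := Real.log_le_log (by positivity : (0:ℝ) < (k:ℝ)) (by linarith : (k:ℝ) ≤ (k:ℝ)+1)
        simpa [hcdef] using this
      have hck : c k ≤ 1/(k:ℝ) := by
        have h1 : c k = Real.log (((k:ℝ)+1)/(k:ℝ)) := by
          rw [hcdef]
          rw [Real.log_div (by positivity) (by positivity)]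
        rw [h1]
        have h2 := Real.log_le_sub_one_of_pos (by positivity : (0:ℝ) < ((k:ℝ)+1)/(k:ℝ))
        have h3 : ((k:ℝ)+1)/(k:ℝ) - 1 = 1/(k:ℝ) := by field_simp; ring
        linarith
      have hpow : ((k:ℝ)+1)^(2*α) ≤ (k:ℝ)+1 := by
        calc ((k:ℝ)+1)^(2*α) ≤ ((k:ℝ)+1)^(1:ℝ) :=
            Real.rpow_le_rpow_of_exponent_le (by linarith) (by linarith)
        _ = (k:ℝ)+1 := Real.rpow_one _
      have hψk : ψ k ^ 2 = (c k)^2 / L^2 := by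
        rw [hψ k hk1 (by omega), neg_sq, div_pow]
      rw [hψk]
      have h6 : ((k:ℝ)+1) * c k ≤ 2 := by
        have e1 : ((k:ℝ)+1) * c k ≤ ((k:ℝ)+1) * (1/(k:ℝ)) :=
          mul_le_mul_of_nonneg_left hck (by linarith)
        have e2 : ((k:ℝ)+1) * (1/(k:ℝ)) ≤ 2 := by
          rw [mul_one_div, div_le_iff₀ hkpos]; linarith
        exact e1.trans e2
      have h7 : ((k:ℝ)+1)^(2*α) * (c k)^2 ≤ 2 * c k := by
        calc ((k:ℝ)+1)^(2*α) * (c k)^2 ≤ ((k:ℝ)+1) * (c k)^2 :=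
            mul_le_mul_of_nonneg_right hpow (sq_nonneg _)
        _ = (((k:ℝ)+1) * c k) * c k := by ring
        _ ≤ 2 * c k := mul_le_mul_of_nonneg_right h6 hc0
      calc ((k:ℝ)+1)^(2*α) * ((c k)^2 / L^2)
          = (((k:ℝ)+1)^(2*α) * (c k)^2) / L^2 := by ring
        _ ≤ (2 * c k) / L^2 := by gcongr
        _ = (2/L^2) * c k := by ring
    · have hk0 : k = 0 := by omega
      subst hk0
      have hc00 : c 0 = 0 := by simp [hcdef]
      rw [hψ0, hc00]
      norm_num
  have hsum := Finset.sum_le_sum hterm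
  refine hsum.trans ?_
  rw [← Finset.mul_sum]
  have htel : ∑ k ∈ Finset.range (n+2), c k = L := by
    have h1 := Finset.sum_range_sub (f := fun k => Real.log (k:ℝ)) (n+2)
    have h2 : ∑ k ∈ Finset.range (n+2), c k
        = ∑ k ∈ Finset.range (n+2), (Real.log ((k+1:ℕ):ℝ) - Real.log (k:ℝ)) := by
      refine Finset.sum_congr rfl fun k _ => ?_
      rw [hcdef]
      push_cast
      ring_nf
    rw [h2, h1]
    simp [hLdef]
  rw [htel]
  have heq : 2/L^2 * L = 2/L := by
    field_simp
  rw [heq]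

private noncomputable def phiR (α : ℝ) (n k : ℕ) : ℝ :=
  if k ≤ n then 1 - (k:ℝ)^(1-α)/((n:ℝ)+1)^(1-α) else 0

private noncomputable def phiL (n k : ℕ) : ℝ :=
  if k ≤ n then 1 - Real.log ((k:ℝ)+1)/Real.log ((n:ℝ)+2) else 0

private lemma phiR_zero (α : ℝ) (hα : α ≤ 1/2) (n : ℕ) : phiR α n 0 = 1 := by
  rw [phiR, if_pos (Nat.zero_le n)]
  rw [Nat.cast_zero, Real.zero_rpow (by linarith : (1:ℝ)-α ≠ 0)]
  simp

private lemma phiR_diff (α : ℝ) (hα : α ≤ 1/2) (n k : ℕ) (h1 : 1 ≤ k) (h2 : k ≤ n+1) :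
    phiR α n k - phiR α n (k-1)
      = -(((k:ℝ)^(1-α) - ((k:ℝ)-1)^(1-α))/((n:ℝ)+1)^(1-α)) := by
  have hN : (0:ℝ) < ((n:ℝ)+1)^(1-α) := Real.rpow_pos_of_pos (by positivity) _
  have hcast : ((k-1:ℕ):ℝ) = (k:ℝ)-1 := by
    rw [Nat.cast_sub h1, Nat.cast_one]
  by_cases hk : k ≤ n
  · rw [phiR, phiR, if_pos hk, if_pos (by omega), hcast]
    field_simp
    ring
  · have hk' : k = n+1 := by omega
    subst hk'
    rw [phiR, phiR, if_neg (by omega), if_pos (by omega), hcast]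
    push_cast
    rw [show (n:ℝ)+1-1 = (n:ℝ) by ring]
    field_simp
    ring

private lemma phiL_zero (n : ℕ) : phiL n 0 = 1 := by
  rw [phiL, if_pos (Nat.zero_le n)]
  simp

private lemma phiL_diff (n k : ℕ) (h1 : 1 ≤ k) (h2 : k ≤ n+1) :
    phiL n k - phiL n (k-1)
      = -((Real.log ((k:ℝ)+1) - Real.log (k:ℝ)) / Real.log ((n:ℝ)+2)) := by
  have hL : (0:ℝ) < Real.log ((n:ℝ)+2) :=
    Real.log_pos (by linarith [Nat.cast_nonneg (α := ℝ) n])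
  have hcast : ((k-1:ℕ):ℝ) = (k:ℝ)-1 := by
    rw [Nat.cast_sub h1, Nat.cast_one]
  by_cases hk : k ≤ n
  · rw [phiL, phiL, if_pos hk, if_pos (by omega), hcast]
    rw [show (k:ℝ)-1+1 = (k:ℝ) by ring]
    field_simp
    ring
  · have hk' : k = n+1 := by omega
    subst hk'
    rw [phiL, phiL, if_neg (by omega), if_pos (by omega), hcast]
    push_cast
    rw [show (n:ℝ)+1-1+1 = (n:ℝ)+1 by ring, show (n:ℝ)+1+1 = (n:ℝ)+2 by ring]
    field_simp
    ring

/-- Riesz polynomials for f = 1 - z₁z₂: explicit formula for pₙf - 1,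
the decay ‖pₙf - 1‖²_α ≤ C/(n+1)^{1-2α}, and hence cyclicity for α ≤ 1/2. -/
theorem stmt11 (α : ℝ) (hα : α ≤ 1 / 2)
    (f : ℕ → ℕ → ℂ)
    (hf : f = fun k l => if k = 0 ∧ l = 0 then 1 else if k = 1 ∧ l = 1 then -1 else 0)
    (p : ℕ → ℕ → ℕ → ℂ)
    (hp : p = fun (n k l : ℕ) =>
      if k = l ∧ k ≤ n then ((1 - (k : ℝ) ^ (1 - α) / ((n : ℝ) + 1) ^ (1 - α) : ℝ) : ℂ)
      else 0) :
    (∀ n k l, conv2 (p n) f k l - one2 k l =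
        if k = l ∧ 1 ≤ k ∧ k ≤ n + 1 then
          ((-(((k : ℝ) ^ (1 - α) - ((k : ℝ) - 1) ^ (1 - α)) / ((n : ℝ) + 1) ^ (1 - α)) : ℝ) : ℂ)
        else 0) ∧
    (∃ C : ℝ, 0 < C ∧ ∀ n : ℕ,
        Dnorm2 α (fun k l => conv2 (p n) f k l - one2 k l) ≤
          ENNReal.ofReal (C / ((n : ℝ) + 1) ^ (1 - 2 * α))) ∧
    Cyclic2 α f := by
  have hq1 : (0:ℝ) < 1 - α := by linarith
  have hpn : ∀ n, p n = fun i j => if i = j then ((phiR α n i : ℝ) : ℂ) else 0 := by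
    intro n
    funext i j
    rw [hp]
    by_cases h : i = j
    · simp only [phiR, apply_ite Complex.ofReal, Complex.ofReal_zero, ite_and]
    · simp [h]
  have hA : ∀ n k l, conv2 (p n) f k l - one2 k l
      = if k = l ∧ 1 ≤ k then ((phiR α n k - phiR α n (k-1) : ℝ) : ℂ) else 0 := by
    intro n k l
    rw [hpn n]
    exact convA' f hf _ (phiR_zero α hα n) k l
  refine ⟨?_, ⟨16*(1-α)^2, by positivity, ?_⟩, ?_⟩
  · -- explicit formula
    intro n k l
    rw [hA]
    by_cases h : k = l ∧ 1 ≤ k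
    · rw [if_pos h]
      by_cases h2 : k ≤ n+1
      · rw [if_pos ⟨h.1, h.2, h2⟩, phiR_diff α hα n k h.2 h2]
      · rw [if_neg (by tauto)]
        have z1 : phiR α n k = 0 := by rw [phiR, if_neg (by omega)]
        have z2 : phiR α n (k-1) = 0 := by rw [phiR, if_neg (by omega)]
        rw [z1, z2]
        norm_num
    · rw [if_neg h, if_neg (by tauto)]
  · -- norm bound
    intro n
    set ψ : ℕ → ℝ := fun k => if k = 0 then 0 else phiR α n k - phiR α n (k-1) with hψdef
    have hfun : (fun k l => conv2 (p n) f k l - one2 k l)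
        = fun k l => if k = l then ((ψ k : ℝ) : ℂ) else 0 := by
      funext k l
      rw [hA n k l]
      by_cases h : k = l
      · subst h
        by_cases h0 : 1 ≤ k
        · rw [if_pos ⟨rfl, h0⟩, if_pos rfl, hψdef]
          simp only
          rw [if_neg (by omega)]
        · have hk0 : k = 0 := by omega
          subst hk0
          simp [hψdef]
      · rw [if_neg (by tauto), if_neg h]
    have hvan : ∀ k, n + 2 ≤ k → ψ k = 0 := by
      intro k hk
      rw [hψdef]
      simp only
      rw [if_neg (by omega)]
      have z1 : phiR α n k = 0 := by rw [phiR, if_neg (by omega)]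
      have z2 : phiR α n (k-1) = 0 := by rw [phiR, if_neg (by omega)]
      rw [z1, z2]
      ring
    rw [hfun, diag_norm' α ψ (n+2) hvan]
    apply ENNReal.ofReal_le_ofReal
    refine rieszSum' α hα n ψ (by simp [hψdef]) ?_
    intro k h1 h2
    rw [hψdef]
    simp only
    rw [if_neg (by omega)]
    exact phiR_diff α hα n k h1 h2
  · -- cyclicity
    refine ⟨fun n => fun i j => if i = j then ((phiL n i : ℝ) : ℂ) else 0,
      fun n => ⟨n, ?_⟩, ?_⟩
    · intro k l h
      show (if k = l then ((phiL n k : ℝ) : ℂ) else 0) = 0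
      by_cases hkl : k = l
      · rw [if_pos hkl]
        have hz : phiL n k = 0 := by rw [phiL, if_neg (by omega)]
        rw [hz]
        norm_num
      · rw [if_neg hkl]
    · have hbound : ∀ n, Dnorm2 α
          (fun k l => conv2 (fun i j => if i = j then ((phiL n i : ℝ) : ℂ) else 0) f k l
            - one2 k l)
          ≤ ENNReal.ofReal (2 / Real.log ((n:ℝ)+2)) := by
        intro n
        set ψ : ℕ → ℝ := fun k => if k = 0 then 0 else phiL n k - phiL n (k-1) with hψdef
        have hA2 : ∀ k l, conv2 (fun i j => if i = j then ((phiL n i : ℝ) : ℂ) else 0) f k l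
            - one2 k l
            = if k = l ∧ 1 ≤ k then ((phiL n k - phiL n (k-1) : ℝ) : ℂ) else 0 :=
          convA' f hf _ (phiL_zero n)
        have hfun : (fun k l => conv2 (fun i j => if i = j then ((phiL n i : ℝ) : ℂ) else 0) f k l
            - one2 k l)
            = fun k l => if k = l then ((ψ k : ℝ) : ℂ) else 0 := by
          funext k l
          rw [hA2 k l]
          by_cases h : k = l
          · subst h
            by_cases h0 : 1 ≤ k
            · rw [if_pos ⟨rfl, h0⟩, if_pos rfl, hψdef]
              simp only
              rw [if_neg (by omega)]
            · have hk0 : k = 0 := by omega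
              subst hk0
              simp [hψdef]
          · rw [if_neg (by tauto), if_neg h]
        have hvan : ∀ k, n + 2 ≤ k → ψ k = 0 := by
          intro k hk
          rw [hψdef]
          simp only
          rw [if_neg (by omega)]
          have z1 : phiL n k = 0 := by rw [phiL, if_neg (by omega)]
          have z2 : phiL n (k-1) = 0 := by rw [phiL, if_neg (by omega)]
          rw [z1, z2]
          ring
        rw [hfun, diag_norm' α ψ (n+2) hvan]
        apply ENNReal.ofReal_le_ofReal
        refine logSum' α hα n ψ (by simp [hψdef]) ?_
        intro k h1 h2
        rw [hψdef]
        simp only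
        rw [if_neg (by omega)]
        exact phiL_diff n k h1 h2
      have h0 : Tendsto (fun n : ℕ => (2:ℝ) / Real.log ((n:ℝ)+2)) atTop (nhds 0) :=
        Tendsto.div_atTop tendsto_const_nhds
          (Real.tendsto_log_atTop.comp
            (tendsto_atTop_add_const_right atTop 2 tendsto_natCast_atTop_atTop))
      have h1 : Tendsto (fun n : ℕ => ENNReal.ofReal (2 / Real.log ((n:ℝ)+2))) atTop (nhds 0) := by
        have := ENNReal.tendsto_ofReal h0
        simpa using this
      exact tendsto_of_tendsto_of_tendsto_of_le_of_le tendsto_const_nhds h1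
        (fun n => zero_le) hbound
end

section
/- The function f(z1,z2) = 1 − z1 z2 is cyclic in 𝔇_α if and only if α ≤ 1/2. -/
open scoped ENNReal NNReal Classical
open Filter

/-!
Since `(1 - z₁z₂) p` has diagonal `(1 - z) · (diagonal of p)`, and restricting to the diagonal
`a ↦ (a k k)` maps `𝔇_α` contractively to `D_{2α}`, isometrically on sequences supported on the
diagonal, `1 - z₁z₂` is cyclic in `𝔇_α` iff `1 - z` is cyclic in `D_{2α}`.

In `D_β`, the coefficients of `q (1 - z) - 1` telescope to `-1`, so Cauchy–Schwarz gives
`‖q (1 - z) - 1‖² ≥ (∑ (k+1)^(-β))⁻¹`, which is positive for `β > 1`. For `β ≤ 1` the partial sums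
`S_n = ∑_{k ≤ n} (k+1)^(-β)` diverge, and the polynomials with coefficients `1 - S_k / S_n`
achieve `‖q (1 - z) - 1‖² = 1 / S_n`.
-/

open Finset

def oneSubZ : ℕ → ℂ := fun k => if k = 0 then 1 else if k = 1 then -1 else 0

def oneSubZ₁Z₂ : ℕ → ℕ → ℂ := fun k l =>
  if k = 0 ∧ l = 0 then 1 else if k = 1 ∧ l = 1 then -1 else 0

lemma wt_mul_self (α : ℝ) (k : ℕ) : wt α k * wt α k = wt (2 * α) k := by
  rw [wt, wt, mul_comm 2 α, ENNReal.rpow_mul, ENNReal.rpow_two, sq]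

lemma wt_mul_nnnorm_sq (β : ℝ) (k : ℕ) (z : ℂ) :
    wt β k * (‖z‖₊ : ℝ≥0∞) ^ 2 = ENNReal.ofReal (((k : ℝ) + 1) ^ β * ‖z‖ ^ 2) := by
  rw [ENNReal.ofReal_mul (by positivity), ← ENNReal.ofReal_rpow_of_pos (by positivity),
    ENNReal.ofReal_pow (norm_nonneg z), ofReal_norm, enorm_eq_nnnorm, wt]
  norm_cast

lemma dnorm2_diag_le_Dnorm2 (α : ℝ) (a : ℕ → ℕ → ℂ) :
    dnorm2 (2 * α) (fun k => a k k) ≤ Dnorm2 α a := by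
  simp only [dnorm2, Dnorm2, ← wt_mul_self]
  exact ENNReal.tsum_comp_le_tsum_of_injective (f := fun k => (k, k))
    (fun _ _ h => congrArg Prod.fst h) (fun p => wt α p.1 * wt α p.2 * (‖a p.1 p.2‖₊ : ℝ≥0∞) ^ 2)

lemma Dnorm2_eq_dnorm2_diag (α : ℝ) {a : ℕ → ℕ → ℂ} (ha : ∀ k l, k ≠ l → a k l = 0) :
    Dnorm2 α a = dnorm2 (2 * α) (fun k => a k k) := by
  simp only [dnorm2, Dnorm2, ← wt_mul_self]
  refine (Function.Injective.tsum_eq (g := fun k => (k, k))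
    (fun _ _ h => congrArg Prod.fst h) fun ⟨k, l⟩ hkl => ⟨k, ?_⟩).symm
  by_contra hne
  exact hkl (by simp [ha k l fun h => hne (h ▸ rfl)])

lemma dnorm2_eq_ofReal_sum (β : ℝ) {g : ℕ → ℂ} {N : ℕ} (hg : ∀ k, N ≤ k → g k = 0) :
    dnorm2 β g = ENNReal.ofReal (∑ k ∈ range N, ((k : ℝ) + 1) ^ β * ‖g k‖ ^ 2) := by
  rw [dnorm2, tsum_eq_sum (s := range N) fun k hk => by simp [hg k (by simpa using hk)],
    ENNReal.ofReal_sum_of_nonneg fun k _ => by positivity]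
  simp only [wt_mul_nnnorm_sq]

lemma ofReal_sum_le_dnorm2 (β : ℝ) (g : ℕ → ℂ) (N : ℕ) :
    ENNReal.ofReal (∑ k ∈ range N, ((k : ℝ) + 1) ^ β * ‖g k‖ ^ 2) ≤ dnorm2 β g := by
  rw [ENNReal.ofReal_sum_of_nonneg fun k _ => by positivity]
  simp only [← wt_mul_nnnorm_sq]
  exact ENNReal.sum_le_tsum _

lemma conv1_oneSubZ (q : ℕ → ℂ) (k : ℕ) :
    conv1 q oneSubZ k = q k - if k = 0 then 0 else q (k - 1) := by
  rcases k with _ | k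
  · simp [conv1, oneSubZ]
  · rw [conv1, sum_range_succ, sum_range_succ, sum_eq_zero fun i hi => ?_]
    · simp [oneSubZ, sub_eq_add_neg, add_comm]
    · simp only [mem_range] at hi
      simp [oneSubZ, show k + 1 - i ≠ 0 by omega, show k + 1 - i ≠ 1 by omega]

lemma conv2_oneSubZ₁Z₂ (p : ℕ → ℕ → ℂ) (k l : ℕ) :
    conv2 p oneSubZ₁Z₂ k l = p k l - if k = 0 ∨ l = 0 then 0 else p (k - 1) (l - 1) := by
  by_cases h00 : k = 0 ∧ l = 0
  · simp [conv2, oneSubZ₁Z₂, h00]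
  have hcorner : k - 1 < k + 1 ∧ l - 1 < l + 1 := by omega
  rw [conv2, ← sum_product', sum_eq_add_of_mem (k, l) (k - 1, l - 1) (by simp)
    (by simp [hcorner]) (by simp [Prod.ext_iff]; omega)]
  · simp only [oneSubZ₁Z₂]
    split_ifs <;> first | omega | simp [sub_eq_add_neg]
  · rintro ⟨i, j⟩ hij hne
    simp only [mem_product, mem_range, ne_eq, Prod.ext_iff] at hij hne
    simp only [oneSubZ₁Z₂]
    split_ifs <;> first | omega | simp

theorem cyclic2_oneSubZ₁Z₂_iff (α : ℝ) : Cyclic2 α oneSubZ₁Z₂ ↔ Cyclic1 (2 * α) oneSubZ := by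
  have hdiag (p : ℕ → ℕ → ℂ) (k : ℕ) :
      conv2 p oneSubZ₁Z₂ k k - one2 k k = conv1 (fun i => p i i) oneSubZ k - one1 k := by
    simp [conv2_oneSubZ₁Z₂, conv1_oneSubZ, one2, one1]
  constructor
  · rintro ⟨p, hp, hlim⟩
    refine ⟨fun n i => p n i i, fun n => ?_, ?_⟩
    · obtain ⟨m, hm⟩ := hp n
      exact ⟨m, fun k hk => hm k k (Or.inl hk)⟩
    · refine tendsto_of_tendsto_of_tendsto_of_le_of_le tendsto_const_nhds hlim
        (fun _ => zero_le) fun n => ?_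
      have h := dnorm2_diag_le_Dnorm2 α fun k l => conv2 (p n) oneSubZ₁Z₂ k l - one2 k l
      simp only [hdiag] at h
      exact h
  · rintro ⟨q, hq, hlim⟩
    refine ⟨fun n k l => if k = l then q n k else 0, fun n => ?_, ?_⟩
    · obtain ⟨m, hm⟩ := hq n
      refine ⟨m, fun k l hkl => ?_⟩
      dsimp only
      split_ifs with h
      · exact hm k (by omega)
      · rfl
    · refine hlim.congr fun n => ((Dnorm2_eq_dnorm2_diag α fun k l hkl => ?_).trans ?_).symm
      · simp [conv2_oneSubZ₁Z₂, one2, hkl]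
        split_ifs <;> first | omega | simp
      · simp [hdiag]

lemma sum_range_conv1_oneSubZ (q : ℕ → ℂ) (n : ℕ) :
    ∑ k ∈ range (n + 1), conv1 q oneSubZ k = q n := by
  induction n with
  | zero => simp [conv1_oneSubZ]
  | succ n ih => rw [sum_range_succ, ih, conv1_oneSubZ]; simp

lemma norm_sum_sq_div_le (β : ℝ) (g : ℕ → ℂ) (N : ℕ) :
    ‖∑ k ∈ range N, g k‖ ^ 2 / ∑ k ∈ range N, ((k : ℝ) + 1) ^ (-β) ≤
      ∑ k ∈ range N, ((k : ℝ) + 1) ^ β * ‖g k‖ ^ 2 :=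
  calc _ ≤ (∑ k ∈ range N, ‖g k‖) ^ 2 / ∑ k ∈ range N, ((k : ℝ) + 1) ^ (-β) := by
        gcongr
        exact norm_sum_le _ _
    _ ≤ ∑ k ∈ range N, ‖g k‖ ^ 2 / ((k : ℝ) + 1) ^ (-β) :=
        sq_sum_div_le_sum_sq_div _ _ fun k _ => by positivity
    _ = _ := sum_congr rfl fun k _ => by
        rw [Real.rpow_neg (by positivity), div_inv_eq_mul, mul_comm]

lemma summable_succ_rpow_neg {β : ℝ} (hβ : 1 < β) :
    Summable fun k : ℕ => ((k : ℝ) + 1) ^ (-β) := by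
  exact_mod_cast (summable_nat_add_iff 1).2 (Real.summable_nat_rpow.2 (by linarith : -β < -1))

lemma ofReal_inv_tsum_le_dnorm2 {β : ℝ} (hβ : 1 < β) {m : ℕ} {q : ℕ → ℂ} (hq : IsPoly1 m q) :
    ENNReal.ofReal (∑' k : ℕ, ((k : ℝ) + 1) ^ (-β))⁻¹ ≤
      dnorm2 β fun k => conv1 q oneSubZ k - one1 k := by
  set g : ℕ → ℂ := fun k => conv1 q oneSubZ k - one1 k
  have htel : ∑ k ∈ range (m + 2), g k = -1 := by
    simp [g, sum_sub_distrib, sum_range_conv1_oneSubZ, hq (m + 1) (by omega), one1]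
  have hpartial : ∑ k ∈ range (m + 2), ((k : ℝ) + 1) ^ (-β) ≤ ∑' k : ℕ, ((k : ℝ) + 1) ^ (-β) :=
    (summable_succ_rpow_neg hβ).sum_le_tsum _ fun k _ => by positivity
  calc ENNReal.ofReal (∑' k : ℕ, ((k : ℝ) + 1) ^ (-β))⁻¹
      ≤ ENNReal.ofReal (‖∑ k ∈ range (m + 2), g k‖ ^ 2 /
          ∑ k ∈ range (m + 2), ((k : ℝ) + 1) ^ (-β)) := by
        rw [htel, norm_neg, norm_one, one_pow, one_div]
        gcongr
    _ ≤ ENNReal.ofReal (∑ k ∈ range (m + 2), ((k : ℝ) + 1) ^ β * ‖g k‖ ^ 2) :=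
        ENNReal.ofReal_le_ofReal (norm_sum_sq_div_le β g _)
    _ ≤ dnorm2 β g := ofReal_sum_le_dnorm2 β g _

lemma not_cyclic1_oneSubZ {β : ℝ} (hβ : 1 < β) : ¬ Cyclic1 β oneSubZ := by
  rintro ⟨q, hq, hlim⟩
  have hbound := ge_of_tendsto' hlim fun n => ofReal_inv_tsum_le_dnorm2 hβ (hq n).choose_spec
  have hpos : 0 < ∑' k : ℕ, ((k : ℝ) + 1) ^ (-β) :=
    (summable_succ_rpow_neg hβ).tsum_pos (fun _ => by positivity) 0 (by positivity)
  simp only [nonpos_iff_eq_zero, ENNReal.ofReal_eq_zero] at hbound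
  linarith [inv_pos.2 hpos]

noncomputable def weightSum (β : ℝ) (n : ℕ) : ℝ := ∑ j ∈ range (n + 1), ((j : ℝ) + 1) ^ (-β)

lemma weightSum_pos (β : ℝ) (n : ℕ) : 0 < weightSum β n :=
  sum_pos (fun j _ => by positivity) nonempty_range_add_one

lemma tendsto_weightSum_atTop {β : ℝ} (hβ : β ≤ 1) : Tendsto (weightSum β) atTop atTop := by
  refine tendsto_atTop_mono (fun n => sum_le_sum fun j _ => ?_)
    (Real.tendsto_sum_range_one_div_nat_succ_atTop.comp (tendsto_add_atTop_nat 1))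
  rw [one_div, ← Real.rpow_neg_one]
  exact Real.rpow_le_rpow_of_exponent_le (by linarith [(j.cast_nonneg : (0 : ℝ) ≤ j)]) (by linarith)

noncomputable def optimalApprox (β : ℝ) (n : ℕ) : ℕ → ℂ := fun k =>
  if k ≤ n then ((1 - weightSum β k / weightSum β n : ℝ) : ℂ) else 0

lemma conv1_optimalApprox_sub_one1 (β : ℝ) (n k : ℕ) :
    conv1 (optimalApprox β n) oneSubZ k - one1 k =
      if k ≤ n then ((-(((k : ℝ) + 1) ^ (-β) / weightSum β n) : ℝ) : ℂ) else 0 := by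
  have hS := (weightSum_pos β n).ne'
  rw [conv1_oneSubZ]
  rcases k with _ | k
  · simp [optimalApprox, one1, weightSum]
  · have hsucc : weightSum β (k + 1) = weightSum β k + ((k + 1 : ℕ) + 1 : ℝ) ^ (-β) :=
      sum_range_succ _ (k + 1)
    simp only [optimalApprox, one1, k.succ_ne_zero, if_false, sub_zero]
    split_ifs with h₁ h₂
    · rw [hsucc]
      push_cast
      field_simp
      ring
    · omega
    · obtain rfl : k = n := by omega
      simp [div_self hS]
    · simp

lemma dnorm2_optimalApprox (β : ℝ) (n : ℕ) :
    dnorm2 β (fun k => conv1 (optimalApprox β n) oneSubZ k - one1 k) =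
      ENNReal.ofReal (weightSum β n)⁻¹ := by
  rw [dnorm2_eq_ofReal_sum β (N := n + 1) fun k hk => by
    simp [conv1_optimalApprox_sub_one1, show ¬k ≤ n by omega]]
  congr 1
  calc ∑ k ∈ range (n + 1), ((k : ℝ) + 1) ^ β * ‖conv1 (optimalApprox β n) oneSubZ k - one1 k‖ ^ 2
      = ∑ k ∈ range (n + 1), ((k : ℝ) + 1) ^ (-β) / weightSum β n ^ 2 :=
        sum_congr rfl fun k hk => by
          have hk' : k ≤ n := Nat.lt_succ_iff.1 (mem_range.1 hk)
          rw [conv1_optimalApprox_sub_one1, if_pos hk', Complex.norm_real, Real.norm_eq_abs, sq_abs,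
            Real.rpow_neg (by positivity)]
          field_simp
    _ = (weightSum β n)⁻¹ := by
        rw [← sum_div, ← weightSum]
        field_simp [(weightSum_pos β n).ne']

lemma cyclic1_oneSubZ {β : ℝ} (hβ : β ≤ 1) : Cyclic1 β oneSubZ := by
  refine ⟨optimalApprox β, fun n => ⟨n, fun k hk => by simp [optimalApprox, not_le.2 hk]⟩, ?_⟩
  simp only [dnorm2_optimalApprox]
  simpa using ENNReal.tendsto_ofReal (tendsto_inv_atTop_zero.comp (tendsto_weightSum_atTop hβ))

theorem cyclic1_oneSubZ_iff (β : ℝ) : Cyclic1 β oneSubZ ↔ β ≤ 1 :=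
  ⟨fun h => not_lt.1 fun hβ => not_cyclic1_oneSubZ hβ h, cyclic1_oneSubZ⟩

/-- f = 1 - z₁z₂ is cyclic in 𝔇_α iff α ≤ 1/2. -/
theorem stmt12 (α : ℝ) :
    Cyclic2 α (fun k l => if k = 0 ∧ l = 0 then 1 else if k = 1 ∧ l = 1 then -1 else 0)
      ↔ α ≤ 1 / 2 := by
  change Cyclic2 α oneSubZ₁Z₂ ↔ _
  rw [cyclic2_oneSubZ₁Z₂_iff, cyclic1_oneSubZ_iff]
  constructor <;> intro h <;> linarith
end
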